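/- arXiv:2110.12231 — 5 statements merged into one kernel-verified Lean document; each statement's English description precedes it below -/
import Mathlib

section
/- Let a₁, a₂, s₂, s₃ > 0 and s₁ > 1. Then there exist constants 0 < c ≤ C and m₀ ≥ 1 such that for all real m ≥ m₀ and all integers R with R ≥ m^{1/s₂}, writing S(m,R) = Σ_{i=1}^{R} a₁ i^{−s₁} / (1 + a₂ m i^{−s₂})^{s₃}: (i) if s₂ s₃ > s₁ − 1 then c m^{(1−s₁)/s₂} ≤ S(m,R) ≤ C m^{(1−s₁)/s₂}; (ii) if s₂ s₃ = s₁ − 1 then c m^{−s₃} log m ≤ S(m,R) ≤ C m^{−s₃} log m; (iii) if s₂ s₃ < s₁ − 1 then c m^{−s₃} ≤ S(m,R) ≤ C m^{−s₃}. Equivalently, S(m,R) = Θ(m^{max{−s₃, (1−s₁)/s₂}}) when s₂ s₃ ≠ s₁ − 1 and S(m,R) = Θ(m^{(1−s₁)/s₂} log m) when s₂ s₃ = s₁ − 1. -/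
/-- The sum `S(m,R) = Σ_{i=1}^{R} a₁ i^{−s₁} / (1 + a₂ m i^{−s₂})^{s₃}`. -/
noncomputable def powerLawSum (a₁ a₂ s₁ s₂ s₃ m : ℝ) (R : ℕ) : ℝ :=
  ∑ i ∈ Finset.Icc 1 R, a₁ * (i : ℝ) ^ (-s₁) / (1 + a₂ * m * (i : ℝ) ^ (-s₂)) ^ s₃


section Aux


private lemma antOn_rpow {p : ℝ} (hp : p ≤ 0) {A B : ℝ} (hA : 0 < A) :
    AntitoneOn (fun x : ℝ => x ^ p) (Set.Icc A B) := fun x hx _y _hy hxy =>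
  Real.rpow_le_rpow_of_nonpos (lt_of_lt_of_le hA hx.1) hxy hp

private lemma sum_Icc_succ_shift (f : ℕ → ℝ) (N R : ℕ) :
    ∑ j ∈ Finset.Icc (N+1) R, f j = ∑ i ∈ Finset.Ico N R, f (i+1) := by
  rw [← Finset.Ico_add_one_right_eq_Icc, Finset.sum_Ico_eq_sum_range, Finset.sum_Ico_eq_sum_range]
  simp only [Nat.add_sub_add_right]
  exact Finset.sum_congr rfl fun i _ => by rw [Nat.add_right_comm]

private lemma sum_Icc_one_split (f : ℕ → ℝ) (N : ℕ) (hN : 1 ≤ N) :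
    ∑ j ∈ Finset.Icc 1 N, f j = f 1 + ∑ j ∈ Finset.Icc 2 N, f j := by
  have h : Finset.Icc 1 N = insert 1 (Finset.Icc 2 N) := by
    ext a
    simp only [Finset.mem_Icc, Finset.mem_insert]
    omega
  rw [h, Finset.sum_insert (by simp)]

private lemma sum_rpow_tail_le {q : ℝ} (hq : q < -1) (N R : ℕ) (hN : 1 ≤ N) :
    ∑ j ∈ Finset.Icc (N+1) R, (j : ℝ) ^ q ≤ (N : ℝ) ^ (q+1) / (-(q+1)) := by
  have hq1 : (0:ℝ) < -(q+1) := by linarith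
  have hN0 : (0:ℝ) < (N:ℝ) := by exact_mod_cast hN
  rcases le_or_gt N R with hNR | hNR
  · have hI : ∑ j ∈ Finset.Icc (N+1) R, (j : ℝ) ^ q ≤ ∫ x in (N:ℝ)..(R:ℝ), x ^ q := by
      rw [sum_Icc_succ_shift (fun j : ℕ => (j:ℝ) ^ q) N R]
      exact AntitoneOn.sum_le_integral_Ico hNR (antOn_rpow (by linarith) hN0)
    have hInt : (∫ x in (N:ℝ)..(R:ℝ), x ^ q) = ((R:ℝ) ^ (q+1) - (N:ℝ) ^ (q+1)) / (q+1) := by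
      apply integral_rpow
      right
      refine ⟨by linarith, ?_⟩
      rw [Set.uIcc_of_le (by exact_mod_cast hNR)]
      rintro ⟨h0, -⟩
      linarith
    have hR0 : (0:ℝ) ≤ (R:ℝ) ^ (q+1) := Real.rpow_nonneg (Nat.cast_nonneg R) _
    calc ∑ j ∈ Finset.Icc (N+1) R, (j : ℝ) ^ q ≤ ((R:ℝ) ^ (q+1) - (N:ℝ) ^ (q+1)) / (q+1) := by
          rw [← hInt]; exact hI
      _ = ((N:ℝ) ^ (q+1) - (R:ℝ) ^ (q+1)) / (-(q+1)) := by
          rw [div_neg, ← neg_div, neg_sub]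
      _ ≤ (N : ℝ) ^ (q+1) / (-(q+1)) := by
          gcongr
          · linarith
  · rw [Finset.Icc_eq_empty (by omega), Finset.sum_empty]
    positivity

private lemma sum_rpow_head_le {p : ℝ} (hp : -1 < p) (N : ℕ) (hN : 1 ≤ N) :
    ∑ j ∈ Finset.Icc 1 N, (j : ℝ) ^ p ≤ (1 + 1/(p+1)) * (N : ℝ) ^ (p+1) := by
  have hp1 : (0:ℝ) < p + 1 := by linarith
  have hN0 : (0:ℝ) < (N:ℝ) := by exact_mod_cast hN
  have hN1 : (1:ℝ) ≤ (N:ℝ) ^ (p+1) := Real.one_le_rpow (by exact_mod_cast hN) hp1.le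
  rcases le_or_gt 0 p with hp0 | hp0
  · have hb : ∀ j ∈ Finset.Icc 1 N, (j:ℝ) ^ p ≤ (N:ℝ) ^ p := by
      intro j hj
      rw [Finset.mem_Icc] at hj
      exact Real.rpow_le_rpow (Nat.cast_nonneg j) (by exact_mod_cast hj.2) hp0
    calc ∑ j ∈ Finset.Icc 1 N, (j : ℝ) ^ p ≤ (Finset.Icc 1 N).card • (N:ℝ) ^ p :=
          Finset.sum_le_card_nsmul _ _ _ hb
      _ = (N:ℝ) * (N:ℝ) ^ p := by
          rw [Nat.card_Icc, nsmul_eq_mul]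
          norm_num
      _ = (N:ℝ) ^ (p+1) := by
          rw [Real.rpow_add_one hN0.ne' p]; ring
      _ ≤ (1 + 1/(p+1)) * (N : ℝ) ^ (p+1) := by
          nlinarith [Real.rpow_nonneg hN0.le (p+1), one_div_pos.mpr hp1]
  · rw [sum_Icc_one_split (fun j : ℕ => (j:ℝ)^p) N hN]
    have hI : ∑ j ∈ Finset.Icc 2 N, (j : ℝ) ^ p ≤ ∫ x in (1:ℝ)..(N:ℝ), x ^ p := by
      have := sum_Icc_succ_shift (fun j : ℕ => (j:ℝ) ^ p) 1 N
      rw [show (1:ℕ)+1 = 2 by rfl] at this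
      rw [this]
      have hA : (0:ℝ) < ((1:ℕ):ℝ) := by norm_num
      have := AntitoneOn.sum_le_integral_Ico hN (antOn_rpow (le_of_lt hp0) (B := ((N:ℕ):ℝ)) hA)
      simpa using this
    have hInt : (∫ x in (1:ℝ)..(N:ℝ), x ^ p) = ((N:ℝ) ^ (p+1) - 1) / (p+1) := by
      rw [integral_rpow (Or.inl hp)]
      norm_num
    rw [Nat.cast_one, Real.one_rpow]
    have h2 : ((N:ℝ) ^ (p+1) - 1) / (p+1) ≤ (N:ℝ)^(p+1)/(p+1) := by
      gcongr
      · linarith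
    have h3 : (N:ℝ)^(p+1)/(p+1) = 1/(p+1) * (N:ℝ)^(p+1) := by ring
    have h4 : (1 + 1/(p+1)) * (N:ℝ)^(p+1) = (N:ℝ)^(p+1) + 1/(p+1) * (N:ℝ)^(p+1) := by ring
    linarith [hI, hInt, hN1, h2]

private lemma sum_inv_le_log (N : ℕ) : ∑ j ∈ Finset.Icc 1 N, (j:ℝ)^(-1:ℝ) ≤ 1 + Real.log N := by
  have h : ∑ j ∈ Finset.Icc 1 N, (j:ℝ)^(-1:ℝ) = ((harmonic N : ℚ) : ℝ) := by
    rw [harmonic_eq_sum_Icc]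
    push_cast
    exact Finset.sum_congr rfl fun j _ => Real.rpow_neg_one _
  rw [h]
  exact harmonic_le_one_add_log N

private lemma log_le_sum_inv (N : ℕ) : Real.log (N+1) ≤ ∑ j ∈ Finset.Icc 1 N, (j:ℝ)^(-1:ℝ) := by
  have h : ∑ j ∈ Finset.Icc 1 N, (j:ℝ)^(-1:ℝ) = ((harmonic N : ℚ) : ℝ) := by
    rw [harmonic_eq_sum_Icc]
    push_cast
    exact Finset.sum_congr rfl fun j _ => Real.rpow_neg_one _
  rw [h]
  have := log_add_one_le_harmonic N
  push_cast at this ⊢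
  exact this

private lemma rpow_prod_eq (a₁ b m x s₁ s₂ s₃ : ℝ) (hb : 0 < b) (hm : 0 < m) (hx : 0 < x) :
    a₁ * x ^ (-s₁) / (b * m * x ^ (-s₂)) ^ s₃ = a₁ / b ^ s₃ * m ^ (-s₃) * x ^ (s₂ * s₃ - s₁) := by
  have hxs : (0:ℝ) < x ^ (-s₂) := Real.rpow_pos_of_pos hx _
  rw [Real.mul_rpow (by positivity) hxs.le, Real.mul_rpow hb.le hm.le,
    ← Real.rpow_mul hx.le, Real.rpow_neg hm.le s₃,
    show s₂ * s₃ - s₁ = (-s₁) - (-s₂ * s₃) by ring, Real.rpow_sub hx]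
  have h1 : b ^ s₃ ≠ 0 := (Real.rpow_pos_of_pos hb _).ne'
  have h2 : m ^ s₃ ≠ 0 := (Real.rpow_pos_of_pos hm _).ne'
  have h3 : x ^ (-s₂ * s₃) ≠ 0 := (Real.rpow_pos_of_pos hx _).ne'
  field_simp

end Aux

set_option maxHeartbeats 1000000 in
/-- **Two-sided asymptotics of power-law sums (Lemma C.1), decaying case s₁ > 1.** -/
theorem statement_8 (a₁ a₂ s₁ s₂ s₃ : ℝ) (ha₁ : 0 < a₁) (ha₂ : 0 < a₂)
    (hs₂ : 0 < s₂) (hs₃ : 0 < s₃) (hs₁ : 1 < s₁) :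
    ∃ c C : ℝ, 0 < c ∧ c ≤ C ∧ ∃ m₀ : ℝ, 1 ≤ m₀ ∧
      ∀ m : ℝ, m₀ ≤ m → ∀ R : ℕ, m ^ (1 / s₂) ≤ (R : ℝ) →
        ((s₁ - 1 < s₂ * s₃ →
            c * m ^ ((1 - s₁) / s₂) ≤ powerLawSum a₁ a₂ s₁ s₂ s₃ m R ∧
            powerLawSum a₁ a₂ s₁ s₂ s₃ m R ≤ C * m ^ ((1 - s₁) / s₂)) ∧
         (s₂ * s₃ = s₁ - 1 →
            c * m ^ (-s₃) * Real.log m ≤ powerLawSum a₁ a₂ s₁ s₂ s₃ m R ∧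
            powerLawSum a₁ a₂ s₁ s₂ s₃ m R ≤ C * m ^ (-s₃) * Real.log m) ∧
         (s₂ * s₃ < s₁ - 1 →
            c * m ^ (-s₃) ≤ powerLawSum a₁ a₂ s₁ s₂ s₃ m R ∧
            powerLawSum a₁ a₂ s₁ s₂ s₃ m R ≤ C * m ^ (-s₃))) 
:= by
  have h4s : (0:ℝ) < (4:ℝ) ^ s₂ := Real.rpow_pos_of_pos (by norm_num) _
  have hEpos : (0:ℝ) < (1 + a₂) ^ s₃ := Real.rpow_pos_of_pos (by linarith) _
  have hDpos : (0:ℝ) < (1 + a₂ * (4:ℝ) ^ s₂) ^ s₃ :=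
    Real.rpow_pos_of_pos (by positivity) _
  have ha₂s : (0:ℝ) < a₂ ^ s₃ := Real.rpow_pos_of_pos ha₂ _
  have h2s : (0:ℝ) < (2:ℝ) ^ (s₁ - 1) := Real.rpow_pos_of_pos (by norm_num) _
  set E : ℝ := (1 + a₂) ^ s₃ with hEdef
  set D : ℝ := (1 + a₂ * (4:ℝ) ^ s₂) ^ s₃ with hDdef
  set K : ℝ := a₁ / a₂ ^ s₃ with hKdef
  set CT : ℝ := a₁ * (2:ℝ) ^ (s₁ - 1) / (s₁ - 1) with hCTdef
  have hKpos : 0 < K := div_pos ha₁ ha₂s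
  have hCTpos : 0 < CT := div_pos (mul_pos ha₁ h2s) (by linarith)
  set c1 : ℝ := a₁ / (4 * D) with hc1def
  set c2 : ℝ := a₁ / (E * s₂) with hc2def
  set c3 : ℝ := a₁ / E with hc3def
  have hc1 : 0 < c1 := div_pos ha₁ (by linarith)
  have hc2 : 0 < c2 := div_pos ha₁ (by positivity)
  have hc3 : 0 < c3 := div_pos ha₁ hEpos
  set c : ℝ := min c1 (min c2 c3) with hcdef
  have hc : 0 < c := lt_min hc1 (lt_min hc2 hc3)
  have hcc1 : c ≤ c1 := min_le_left _ _
  have hcc2 : c ≤ c2 := le_trans (min_le_right _ _) (min_le_left _ _)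
  have hcc3 : c ≤ c3 := le_trans (min_le_right _ _) (min_le_right _ _)
  set C1 : ℝ := K * (1 + 1/(s₂*s₃ - s₁ + 1)) + CT with hC1def
  set C2 : ℝ := K * (1 + 1/s₂) + CT with hC2def
  set C3 : ℝ := K * (1 + 1/(-(s₂*s₃ - s₁ + 1))) + CT with hC3def
  set C : ℝ := max c (max C1 (max C2 C3)) with hCdef
  have hCC1 : C1 ≤ C := le_trans (le_max_left _ _) (le_max_right _ _)
  have hCC2 : C2 ≤ C := le_trans (le_trans (le_max_left _ _) (le_max_right _ _))
    (le_max_right _ _)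
  have hCC3 : C3 ≤ C := le_trans (le_trans (le_max_right _ _) (le_max_right _ _))
    (le_max_right _ _)
  refine ⟨c, C, hc, le_max_left _ _, max 3 ((2:ℝ) ^ s₂), le_trans (by norm_num) (le_max_left _ _),
    ?_⟩
  intro m hm R hR
  -- basic facts about m
  have hm3 : (3:ℝ) ≤ m := le_trans (le_max_left _ _) hm
  have hm1 : (1:ℝ) ≤ m := by linarith
  have hm0 : (0:ℝ) < m := by linarith
  have hlog : (1:ℝ) ≤ Real.log m := by
    rw [Real.le_log_iff_exp_le hm0]
    have := Real.exp_one_lt_d9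
    linarith
  set X : ℝ := m ^ (1/s₂) with hXdef
  have hX0 : 0 < X := Real.rpow_pos_of_pos hm0 _
  have hX2 : (2:ℝ) ≤ X := by
    have h1 : ((2:ℝ) ^ s₂) ^ (1/s₂) ≤ X :=
      Real.rpow_le_rpow (by positivity) (le_trans (le_max_right _ _) hm) (by positivity)
    rwa [← Real.rpow_mul (by norm_num), mul_one_div, div_self hs₂.ne', Real.rpow_one] at h1
  have hXs : X ^ s₂ = m := by
    rw [hXdef, ← Real.rpow_mul hm0.le, one_div, inv_mul_cancel₀ hs₂.ne', Real.rpow_one]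
  set N : ℕ := ⌊X⌋₊ with hNdef
  have hN2 : 2 ≤ N := Nat.le_floor (by exact_mod_cast hX2)
  have hN1 : 1 ≤ N := by omega
  have hN0 : (0:ℝ) < (N:ℝ) := by exact_mod_cast Nat.lt_of_lt_of_le Nat.zero_lt_two hN2
  have hNX : (N:ℝ) ≤ X := Nat.floor_le hX0.le
  have hXN1 : X < (N:ℝ) + 1 := Nat.lt_floor_add_one X
  have hXhalf : X/2 ≤ (N:ℝ) := by linarith
  have hNR : N ≤ R := by
    have : (N:ℝ) ≤ (R:ℝ) := le_trans hNX hR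
    exact_mod_cast this
  have hR1 : 1 ≤ R := le_trans hN1 hNR
  -- the summand
  set F : ℕ → ℝ := fun i => a₁ * (i : ℝ) ^ (-s₁) / (1 + a₂ * m * (i : ℝ) ^ (-s₂)) ^ s₃
    with hFdef
  have hS : powerLawSum a₁ a₂ s₁ s₂ s₃ m R = ∑ i ∈ Finset.Icc 1 R, F i := rfl
  have hF0 : ∀ i : ℕ, 0 ≤ F i := by
    intro i
    have h1 : (0:ℝ) ≤ (i:ℝ) ^ (-s₁) := Real.rpow_nonneg (Nat.cast_nonneg i) _
    have h2 : (0:ℝ) < (1 + a₂ * m * (i : ℝ) ^ (-s₂)) ^ s₃ := by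
      have : (0:ℝ) ≤ a₂ * m * (i : ℝ) ^ (-s₂) := by positivity
      exact Real.rpow_pos_of_pos (by linarith) _
    exact div_nonneg (by positivity) h2.le
  -- per-term facts on the head range
  have hterm : ∀ i ∈ Finset.Icc 1 N, (0:ℝ) < (i:ℝ) ∧ (i:ℝ) ≤ X ∧ 1 ≤ m * (i:ℝ) ^ (-s₂) := by
    intro i hi
    rw [Finset.mem_Icc] at hi
    have hi0 : (0:ℝ) < (i:ℝ) := by exact_mod_cast hi.1
    have hiX : (i:ℝ) ≤ X := le_trans (by exact_mod_cast hi.2) hNX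
    refine ⟨hi0, hiX, ?_⟩
    have hle : (i:ℝ) ^ s₂ ≤ m := by
      rw [← hXs]; exact Real.rpow_le_rpow hi0.le hiX hs₂.le
    have hpos : (0:ℝ) < (i:ℝ) ^ s₂ := Real.rpow_pos_of_pos hi0 _
    rw [Real.rpow_neg hi0.le, ← div_eq_mul_inv, le_div_iff₀ hpos, one_mul]
    exact hle
  have hub : ∀ i ∈ Finset.Icc 1 N, F i ≤ K * m ^ (-s₃) * (i:ℝ) ^ (s₂*s₃ - s₁) := by
    intro i hi
    obtain ⟨hi0, hiX, hmi⟩ := hterm i hi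
    have key := rpow_prod_eq a₁ a₂ m (i:ℝ) s₁ s₂ s₃ ha₂ hm0 hi0
    rw [hKdef, ← key]
    have hxs : (0:ℝ) < (i:ℝ) ^ (-s₂) := Real.rpow_pos_of_pos hi0 _
    have hden : (a₂ * m * (i:ℝ)^(-s₂)) ^ s₃ ≤ (1 + a₂ * m * (i:ℝ)^(-s₂)) ^ s₃ :=
      Real.rpow_le_rpow (by positivity) (by linarith) hs₃.le
    have hdpos : (0:ℝ) < (a₂ * m * (i:ℝ)^(-s₂)) ^ s₃ :=
      Real.rpow_pos_of_pos (by positivity) _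
    exact div_le_div_of_nonneg_left (by positivity) hdpos hden
  have hlb : ∀ i ∈ Finset.Icc 1 N,
      a₁ / E * m ^ (-s₃) * (i:ℝ) ^ (s₂*s₃ - s₁) ≤ F i := by
    intro i hi
    obtain ⟨hi0, hiX, hmi⟩ := hterm i hi
    have key := rpow_prod_eq a₁ (1 + a₂) m (i:ℝ) s₁ s₂ s₃ (by linarith) hm0 hi0
    rw [hEdef, ← key]
    have hxs : (0:ℝ) < (i:ℝ) ^ (-s₂) := Real.rpow_pos_of_pos hi0 _
    have hbase : 1 + a₂ * m * (i:ℝ)^(-s₂) ≤ (1 + a₂) * m * (i:ℝ)^(-s₂) := by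
      have h1 : (1:ℝ) ≤ m * (i:ℝ)^(-s₂) := hmi
      have h2 : (1 + a₂) * m * (i:ℝ)^(-s₂) = m * (i:ℝ)^(-s₂) + a₂ * (m * (i:ℝ)^(-s₂)) := by
        ring
      have h3 : a₂ * m * (i:ℝ)^(-s₂) = a₂ * (m * (i:ℝ)^(-s₂)) := by ring
      rw [h2, h3]
      linarith
    have hden : (1 + a₂ * m * (i:ℝ)^(-s₂)) ^ s₃ ≤ ((1 + a₂) * m * (i:ℝ)^(-s₂)) ^ s₃ :=
      Real.rpow_le_rpow (by positivity) hbase hs₃.le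
    have hdpos : (0:ℝ) < (1 + a₂ * m * (i:ℝ)^(-s₂)) ^ s₃ :=
      Real.rpow_pos_of_pos (by positivity) _
    exact div_le_div_of_nonneg_left (by positivity) hdpos hden
  -- splitting the sum
  have hsplit : powerLawSum a₁ a₂ s₁ s₂ s₃ m R
      = (∑ i ∈ Finset.Icc 1 N, F i) + ∑ i ∈ Finset.Icc (N+1) R, F i := by
    rw [hS, show Finset.Icc 1 R = Finset.Ioc 0 R from (Finset.Icc_add_one_left_eq_Ioc 0 R).symm ▸ rfl,
      show Finset.Icc 1 N = Finset.Ioc 0 N from (Finset.Icc_add_one_left_eq_Ioc 0 N).symm ▸ rfl,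
      show Finset.Icc (N+1) R = Finset.Ioc N R from (Finset.Icc_add_one_left_eq_Ioc N R).symm ▸ rfl]
    exact (Finset.sum_Ioc_consecutive _ (Nat.zero_le N) hNR).symm
  -- exponent identities
  have hXpow : X ^ (1 - s₁) = m ^ ((1 - s₁)/s₂) := by
    rw [hXdef, ← Real.rpow_mul hm0.le, show 1/s₂ * (1 - s₁) = (1 - s₁)/s₂ by ring]
  -- tail bound
  have hTail : (∑ i ∈ Finset.Icc (N+1) R, F i) ≤ CT * m ^ ((1 - s₁)/s₂) := by
    have step1 : (∑ i ∈ Finset.Icc (N+1) R, F i)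
        ≤ ∑ i ∈ Finset.Icc (N+1) R, a₁ * (i:ℝ) ^ (-s₁) := by
      apply Finset.sum_le_sum
      intro i hi
      have hnum : (0:ℝ) ≤ a₁ * (i:ℝ) ^ (-s₁) := by positivity
      have hden : (1:ℝ) ≤ (1 + a₂ * m * (i:ℝ)^(-s₂)) ^ s₃ := by
        apply Real.one_le_rpow ?_ hs₃.le
        have : (0:ℝ) ≤ a₂ * m * (i:ℝ)^(-s₂) := by positivity
        linarith
      exact div_le_self hnum hden
    have step2 : (∑ i ∈ Finset.Icc (N+1) R, a₁ * (i:ℝ) ^ (-s₁))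
        ≤ a₁ * ((N:ℝ) ^ (-s₁+1) / (-(-s₁+1))) := by
      rw [← Finset.mul_sum]
      exact mul_le_mul_of_nonneg_left (sum_rpow_tail_le (by linarith) N R hN1) ha₁.le
    have step3 : (N:ℝ) ^ (-s₁+1) ≤ (X/2) ^ (-s₁+1) :=
      Real.rpow_le_rpow_of_nonpos (by linarith) hXhalf (by linarith)
    have step4 : (X/2) ^ (-s₁+1) = (2:ℝ) ^ (s₁-1) * m ^ ((1-s₁)/s₂) := by
      rw [show -s₁+1 = 1-s₁ by ring, Real.div_rpow hX0.le (by norm_num), hXpow,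
        show (1:ℝ)-s₁ = -(s₁-1) by ring, Real.rpow_neg (by norm_num : (0:ℝ) ≤ 2),
        div_inv_eq_mul]
      ring
    have hmm : (0:ℝ) ≤ m ^ ((1-s₁)/s₂) := (Real.rpow_pos_of_pos hm0 _).le
    calc (∑ i ∈ Finset.Icc (N+1) R, F i)
        ≤ a₁ * ((N:ℝ) ^ (-s₁+1) / (-(-s₁+1))) := le_trans step1 step2
      _ ≤ a₁ * ((X/2) ^ (-s₁+1) / (-(-s₁+1))) := by
          apply mul_le_mul_of_nonneg_left ?_ ha₁.le
          apply div_le_div_of_nonneg_right step3 (by linarith)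
      _ = CT * m ^ ((1 - s₁)/s₂) := by
          rw [step4, hCTdef, show -(-s₁+1) = s₁ - 1 by ring]
          ring
  -- head bound (generic)
  have hHead : (∑ i ∈ Finset.Icc 1 N, F i)
      ≤ K * m ^ (-s₃) * ∑ i ∈ Finset.Icc 1 N, (i:ℝ) ^ (s₂*s₃ - s₁) := by
    rw [Finset.mul_sum]
    exact Finset.sum_le_sum hub
  have hmneg : (0:ℝ) < m ^ (-s₃) := Real.rpow_pos_of_pos hm0 _
  refine ⟨?_, ?_, ?_⟩
  -- CASE (i)
  · intro hcase
    have hp : (-1:ℝ) < s₂*s₃ - s₁ := by linarith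
    have hp1 : (0:ℝ) < s₂*s₃ - s₁ + 1 := by linarith
    constructor
    -- lower bound
    · set M : ℕ := N/2 + 1 with hMdef
      have hMN : M ≤ N := by omega
      have hsub : Finset.Icc M N ⊆ Finset.Icc 1 R :=
        Finset.Icc_subset_Icc (by omega) hNR
      have hlb2 : ∀ i ∈ Finset.Icc M N, a₁ / D * X ^ (-s₁) ≤ F i := by
        intro i hi
        rw [Finset.mem_Icc] at hi
        have hi0 : (0:ℝ) < (i:ℝ) := by
          have : 1 ≤ i := by omega
          exact_mod_cast this
        have hiN : (i:ℝ) ≤ (N:ℝ) := by exact_mod_cast hi.2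
        have hi4 : X/4 ≤ (i:ℝ) := by
          have h2i : N ≤ 2 * i := by omega
          have : (N:ℝ) ≤ 2 * (i:ℝ) := by exact_mod_cast h2i
          linarith
        have hX4 : (0:ℝ) < X/4 := by linarith
        have hXm : m * (X/4) ^ (-s₂) = (4:ℝ) ^ s₂ := by
          rw [Real.rpow_neg hX4.le, Real.div_rpow hX0.le (by norm_num), hXs, inv_div,
            mul_div_assoc', mul_comm, mul_div_assoc, div_self hm0.ne', mul_one]
        have hid : (i:ℝ) ^ (-s₂) ≤ (X/4) ^ (-s₂) :=
          Real.rpow_le_rpow_of_nonpos hX4 hi4 (by linarith)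
        have hden : 1 + a₂ * m * (i:ℝ)^(-s₂) ≤ 1 + a₂ * (4:ℝ) ^ s₂ := by
          have h1 : m * (i:ℝ)^(-s₂) ≤ m * (X/4)^(-s₂) :=
            mul_le_mul_of_nonneg_left hid hm0.le
          rw [hXm] at h1
          have : a₂ * m * (i:ℝ)^(-s₂) = a₂ * (m * (i:ℝ)^(-s₂)) := by ring
          rw [this]
          have h2' := mul_le_mul_of_nonneg_left h1 ha₂.le
          linarith
        have hnum : X ^ (-s₁) ≤ (i:ℝ) ^ (-s₁) := by
          apply Real.rpow_le_rpow_of_nonpos hi0 ?_ (by linarith)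
          exact le_trans hiN hNX
        have hdpos : (0:ℝ) < (1 + a₂ * m * (i:ℝ)^(-s₂)) ^ s₃ := by
          have : (0:ℝ) ≤ a₂ * m * (i:ℝ)^(-s₂) := by positivity
          exact Real.rpow_pos_of_pos (by linarith) _
        have hDle : (1 + a₂ * m * (i:ℝ)^(-s₂)) ^ s₃ ≤ D := by
          rw [hDdef]
          apply Real.rpow_le_rpow ?_ hden hs₃.le
          have : (0:ℝ) ≤ a₂ * m * (i:ℝ)^(-s₂) := by positivity
          linarith
        have hXnn : (0:ℝ) ≤ X ^ (-s₁) := (Real.rpow_pos_of_pos hX0 _).le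
        rw [div_mul_eq_mul_div]
        exact div_le_div₀ (by positivity) (mul_le_mul_of_nonneg_left hnum ha₁.le) hdpos hDle
      have hcard : (X/4) ≤ ((Finset.Icc M N).card : ℝ) := by
        rw [Nat.card_Icc]
        have h1 : N + 1 - M = N - N/2 := by omega
        rw [h1]
        have h2 : ((N - N/2 : ℕ) : ℝ) = (N:ℝ) - ((N/2 : ℕ) : ℝ) := by
          have : N/2 ≤ N := Nat.div_le_self N 2
          exact Nat.cast_sub this
        rw [h2]
        have h3 : ((N/2 : ℕ) : ℝ) ≤ (N:ℝ)/2 := Nat.cast_div_le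
        have h4 : X/4 ≤ (N:ℝ)/2 := by linarith
        linarith
      have hsum : (Finset.Icc M N).card • (a₁ / D * X ^ (-s₁))
          ≤ ∑ i ∈ Finset.Icc M N, F i := Finset.card_nsmul_le_sum _ _ _ hlb2
      have hsum2 : (∑ i ∈ Finset.Icc M N, F i) ≤ powerLawSum a₁ a₂ s₁ s₂ s₃ m R := by
        rw [hS]
        exact Finset.sum_le_sum_of_subset_of_nonneg hsub (fun i _ _ => hF0 i)
      have hXnn : (0:ℝ) ≤ a₁ / D * X ^ (-s₁) := by positivity
      have hfin : c1 * m ^ ((1-s₁)/s₂) ≤ powerLawSum a₁ a₂ s₁ s₂ s₃ m R := by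
        have h5 : X/4 * (a₁ / D * X ^ (-s₁))
            ≤ ((Finset.Icc M N).card : ℝ) * (a₁ / D * X ^ (-s₁)) :=
          mul_le_mul_of_nonneg_right hcard hXnn
        have h6 : X/4 * (a₁ / D * X ^ (-s₁)) = c1 * m ^ ((1-s₁)/s₂) := by
          rw [← hXpow, show (1:ℝ)-s₁ = 1 + -s₁ by ring, Real.rpow_add hX0, Real.rpow_one,
            hc1def]
          ring
        rw [← h6]
        calc X/4 * (a₁ / D * X ^ (-s₁))
            ≤ ((Finset.Icc M N).card : ℝ) * (a₁ / D * X ^ (-s₁)) := h5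
          _ = (Finset.Icc M N).card • (a₁ / D * X ^ (-s₁)) := (nsmul_eq_mul _ _).symm
          _ ≤ ∑ i ∈ Finset.Icc M N, F i := hsum
          _ ≤ powerLawSum a₁ a₂ s₁ s₂ s₃ m R := hsum2
      calc c * m ^ ((1-s₁)/s₂) ≤ c1 * m ^ ((1-s₁)/s₂) :=
            mul_le_mul_of_nonneg_right hcc1 (Real.rpow_pos_of_pos hm0 _).le
        _ ≤ powerLawSum a₁ a₂ s₁ s₂ s₃ m R := hfin
    -- upper bound
    · have hsum : (∑ i ∈ Finset.Icc 1 N, (i:ℝ) ^ (s₂*s₃ - s₁))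
          ≤ (1 + 1/(s₂*s₃ - s₁ + 1)) * (N:ℝ) ^ (s₂*s₃ - s₁ + 1) :=
        sum_rpow_head_le hp N hN1
      have hNle : (N:ℝ) ^ (s₂*s₃ - s₁ + 1) ≤ X ^ (s₂*s₃ - s₁ + 1) :=
        Real.rpow_le_rpow hN0.le hNX hp1.le
      have hXe : m ^ (-s₃) * X ^ (s₂*s₃ - s₁ + 1) = m ^ ((1-s₁)/s₂) := by
        rw [hXdef, ← Real.rpow_mul hm0.le, ← Real.rpow_add hm0]
        congr 1
        field_simp
        ring
      have hcoef : (0:ℝ) ≤ 1 + 1/(s₂*s₃ - s₁ + 1) := by positivity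
      have hhead2 : (∑ i ∈ Finset.Icc 1 N, F i)
          ≤ K * (1 + 1/(s₂*s₃ - s₁ + 1)) * m ^ ((1-s₁)/s₂) := by
        calc (∑ i ∈ Finset.Icc 1 N, F i)
            ≤ K * m ^ (-s₃) * ∑ i ∈ Finset.Icc 1 N, (i:ℝ) ^ (s₂*s₃ - s₁) := hHead
          _ ≤ K * m ^ (-s₃) * ((1 + 1/(s₂*s₃ - s₁ + 1)) * X ^ (s₂*s₃ - s₁ + 1)) := by
              apply mul_le_mul_of_nonneg_left ?_ (by positivity)
              exact le_trans hsum (mul_le_mul_of_nonneg_left hNle hcoef)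
          _ = K * (1 + 1/(s₂*s₃ - s₁ + 1)) * (m ^ (-s₃) * X ^ (s₂*s₃ - s₁ + 1)) := by ring
          _ = K * (1 + 1/(s₂*s₃ - s₁ + 1)) * m ^ ((1-s₁)/s₂) := by rw [hXe]
      have hmp : (0:ℝ) ≤ m ^ ((1-s₁)/s₂) := (Real.rpow_pos_of_pos hm0 _).le
      calc powerLawSum a₁ a₂ s₁ s₂ s₃ m R
          = (∑ i ∈ Finset.Icc 1 N, F i) + ∑ i ∈ Finset.Icc (N+1) R, F i := hsplit
        _ ≤ K * (1 + 1/(s₂*s₃ - s₁ + 1)) * m ^ ((1-s₁)/s₂) + CT * m ^ ((1-s₁)/s₂) :=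
            add_le_add hhead2 hTail
        _ = C1 * m ^ ((1-s₁)/s₂) := by rw [hC1def]; ring
        _ ≤ C * m ^ ((1-s₁)/s₂) := mul_le_mul_of_nonneg_right hCC1 hmp
  -- CASE (ii)
  · intro hcase
    have hp : s₂*s₃ - s₁ = -1 := by rw [hcase]; ring
    have hex : (1-s₁)/s₂ = -s₃ := by
      field_simp
      linarith
    have hlogX : Real.log X = 1/s₂ * Real.log m := Real.log_rpow hm0 _
    constructor
    -- lower bound
    · have hsub : Finset.Icc 1 N ⊆ Finset.Icc 1 R := Finset.Icc_subset_Icc le_rfl hNR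
      have h1 : a₁ / E * m ^ (-s₃) * ∑ i ∈ Finset.Icc 1 N, (i:ℝ) ^ (-1:ℝ)
          ≤ ∑ i ∈ Finset.Icc 1 N, F i := by
        rw [Finset.mul_sum]
        apply Finset.sum_le_sum
        intro i hi
        have := hlb i hi
        rwa [hp] at this
      have h2 : Real.log X ≤ ∑ i ∈ Finset.Icc 1 N, (i:ℝ) ^ (-1:ℝ) := by
        refine le_trans ?_ (log_le_sum_inv N)
        exact Real.log_le_log hX0 hXN1.le
      have h3 : (∑ i ∈ Finset.Icc 1 N, F i) ≤ powerLawSum a₁ a₂ s₁ s₂ s₃ m R := by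
        rw [hS]
        exact Finset.sum_le_sum_of_subset_of_nonneg hsub (fun i _ _ => hF0 i)
      have h4 : c2 * m ^ (-s₃) * Real.log m
          ≤ a₁ / E * m ^ (-s₃) * Real.log X := by
        rw [hlogX, hc2def]
        have : a₁ / (E * s₂) * m ^ (-s₃) * Real.log m
            = a₁ / E * m ^ (-s₃) * (1/s₂ * Real.log m) := by
          field_simp
        rw [this]
      have h5 : a₁ / E * m ^ (-s₃) * Real.log X
          ≤ a₁ / E * m ^ (-s₃) * ∑ i ∈ Finset.Icc 1 N, (i:ℝ) ^ (-1:ℝ) :=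
        mul_le_mul_of_nonneg_left h2 (by positivity)
      have h6 : c * m ^ (-s₃) * Real.log m ≤ c2 * m ^ (-s₃) * Real.log m := by
        apply mul_le_mul_of_nonneg_right ?_ (by linarith)
        exact mul_le_mul_of_nonneg_right hcc2 hmneg.le
      linarith
    -- upper bound
    · have hsum : (∑ i ∈ Finset.Icc 1 N, (i:ℝ) ^ (-1:ℝ)) ≤ 1 + Real.log N :=
        sum_inv_le_log N
      have hlogN : Real.log N ≤ 1/s₂ * Real.log m := by
        rw [← hlogX]
        exact Real.log_le_log hN0 hNX
      have hhead2 : (∑ i ∈ Finset.Icc 1 N, F i)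
          ≤ K * (1 + 1/s₂) * (m ^ (-s₃) * Real.log m) := by
        have e1 : (∑ i ∈ Finset.Icc 1 N, F i)
            ≤ K * m ^ (-s₃) * ∑ i ∈ Finset.Icc 1 N, (i:ℝ) ^ (-1:ℝ) := by
          rw [← hp]
          exact hHead
        have e2 : (∑ i ∈ Finset.Icc 1 N, (i:ℝ) ^ (-1:ℝ)) ≤ (1 + 1/s₂) * Real.log m := by
          have hq : 1/s₂ * Real.log m ≥ 0 := by positivity
          have : (1 + 1/s₂) * Real.log m = Real.log m + 1/s₂ * Real.log m := by ring
          linarith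
        calc (∑ i ∈ Finset.Icc 1 N, F i)
            ≤ K * m ^ (-s₃) * ∑ i ∈ Finset.Icc 1 N, (i:ℝ) ^ (-1:ℝ) := e1
          _ ≤ K * m ^ (-s₃) * ((1 + 1/s₂) * Real.log m) :=
              mul_le_mul_of_nonneg_left e2 (by positivity)
          _ = K * (1 + 1/s₂) * (m ^ (-s₃) * Real.log m) := by ring
      have htail2 : (∑ i ∈ Finset.Icc (N+1) R, F i) ≤ CT * (m ^ (-s₃) * Real.log m) := by
        have := hTail
        rw [hex] at this
        have h7 : CT * m ^ (-s₃) ≤ CT * (m ^ (-s₃) * Real.log m) := by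
          have h8 : (0:ℝ) ≤ CT * m ^ (-s₃) := by positivity
          have : CT * (m ^ (-s₃) * Real.log m) = CT * m ^ (-s₃) * Real.log m := by ring
          rw [this]
          exact le_mul_of_one_le_right h8 hlog
        linarith
      have hmp : (0:ℝ) ≤ m ^ (-s₃) * Real.log m := by positivity
      calc powerLawSum a₁ a₂ s₁ s₂ s₃ m R
          = (∑ i ∈ Finset.Icc 1 N, F i) + ∑ i ∈ Finset.Icc (N+1) R, F i := hsplit
        _ ≤ K * (1 + 1/s₂) * (m ^ (-s₃) * Real.log m) + CT * (m ^ (-s₃) * Real.log m) :=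
            add_le_add hhead2 htail2
        _ = C2 * (m ^ (-s₃) * Real.log m) := by rw [hC2def]; ring
        _ ≤ C * (m ^ (-s₃) * Real.log m) := mul_le_mul_of_nonneg_right hCC2 hmp
        _ = C * m ^ (-s₃) * Real.log m := by ring
  -- CASE (iii)
  · intro hcase
    have hp : s₂*s₃ - s₁ < -1 := by linarith
    constructor
    -- lower bound
    · have h1mem : 1 ∈ Finset.Icc 1 R := Finset.mem_Icc.mpr ⟨le_rfl, hR1⟩
      have h1 : F 1 ≤ powerLawSum a₁ a₂ s₁ s₂ s₃ m R := by
        rw [hS]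
        exact Finset.single_le_sum (fun i _ => hF0 i) h1mem
      have hF1 : F 1 = a₁ / (1 + a₂ * m) ^ s₃ := by
        rw [hFdef]
        norm_num
      have hden : (1 + a₂ * m) ^ s₃ ≤ E * m ^ s₃ := by
        rw [hEdef, ← Real.mul_rpow (by linarith) hm0.le]
        apply Real.rpow_le_rpow (by positivity) ?_ hs₃.le
        have : (1 + a₂) * m = m + a₂ * m := by ring
        linarith
      have hlow : a₁ / (E * m ^ s₃) ≤ F 1 := by
        rw [hF1]
        apply div_le_div_of_nonneg_left ha₁.le ?_ hden
        positivity
      have heq : a₁ / (E * m ^ s₃) = c3 * m ^ (-s₃) := by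
        rw [hc3def, Real.rpow_neg hm0.le]
        field_simp
      have h2 : c * m ^ (-s₃) ≤ c3 * m ^ (-s₃) :=
        mul_le_mul_of_nonneg_right hcc3 hmneg.le
      rw [← heq] at h2
      linarith
    -- upper bound
    · have hsum : (∑ i ∈ Finset.Icc 1 N, (i:ℝ) ^ (s₂*s₃ - s₁))
          ≤ 1 + 1/(-(s₂*s₃ - s₁ + 1)) := by
        rw [sum_Icc_one_split (fun j : ℕ => (j:ℝ) ^ (s₂*s₃ - s₁)) N hN1]
        have h1 : ((1:ℕ):ℝ) ^ (s₂*s₃ - s₁) = 1 := by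
          rw [Nat.cast_one, Real.one_rpow]
        have h2 := sum_rpow_tail_le hp 1 N le_rfl
        rw [show ((1:ℕ):ℝ) ^ (s₂*s₃ - s₁ + 1) = 1 by rw [Nat.cast_one, Real.one_rpow]] at h2
        rw [show (1:ℕ)+1 = 2 by rfl] at h2
        rw [h1]
        have : (1:ℝ) / (-(s₂*s₃ - s₁ + 1)) = 1 / (-(s₂*s₃ - s₁ + 1)) := rfl
        have h3 : (1:ℝ) / (-(s₂*s₃ - s₁ + 1)) = 1 * (1/(-(s₂*s₃ - s₁ + 1))) := by ring
        linarith [h2]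
      have htail2 : (∑ i ∈ Finset.Icc (N+1) R, F i) ≤ CT * m ^ (-s₃) := by
        refine le_trans hTail ?_
        apply mul_le_mul_of_nonneg_left ?_ hCTpos.le
        apply Real.rpow_le_rpow_of_exponent_le hm1
        rw [div_le_iff₀ hs₂]
        have : s₃ * s₂ = s₂ * s₃ := mul_comm _ _
        linarith
      have hhead2 : (∑ i ∈ Finset.Icc 1 N, F i)
          ≤ K * (1 + 1/(-(s₂*s₃ - s₁ + 1))) * m ^ (-s₃) := by
        calc (∑ i ∈ Finset.Icc 1 N, F i)
            ≤ K * m ^ (-s₃) * ∑ i ∈ Finset.Icc 1 N, (i:ℝ) ^ (s₂*s₃ - s₁) := hHead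
          _ ≤ K * m ^ (-s₃) * (1 + 1/(-(s₂*s₃ - s₁ + 1))) :=
              mul_le_mul_of_nonneg_left hsum (by positivity)
          _ = K * (1 + 1/(-(s₂*s₃ - s₁ + 1))) * m ^ (-s₃) := by ring
      calc powerLawSum a₁ a₂ s₁ s₂ s₃ m R
          = (∑ i ∈ Finset.Icc 1 N, F i) + ∑ i ∈ Finset.Icc (N+1) R, F i := hsplit
        _ ≤ K * (1 + 1/(-(s₂*s₃ - s₁ + 1))) * m ^ (-s₃) + CT * m ^ (-s₃) :=
            add_le_add hhead2 htail2
        _ = C3 * m ^ (-s₃) := by rw [hC3def]; ring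
        _ ≤ C * m ^ (-s₃) := mul_le_mul_of_nonneg_right hCC3 hmneg.le
end

section
/- Let a₁, a₂, s₂, s₃ > 0, let 0 < s₁ ≤ 1 and let κ > 0. Then there exist a constant C > 0 and m₀ ≥ 1 such that for all real m ≥ m₀, setting R = R(m) = ⌊m^{1/s₂ + κ}⌋, one has Σ_{i=1}^{R} a₁ i^{−s₁} / (1 + a₂ m i^{−s₂})^{s₃} ≤ C (1 + log m) · max{ m^{−s₃}, R^{1−s₁} }. -/
lemma sum_inv_le_one_add_log (R : ℕ) :
    ∑ i ∈ Finset.Icc 1 R, (i : ℝ)⁻¹ ≤ 1 + Real.log R := by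
  have h := harmonic_le_one_add_log R
  have he : ((harmonic R : ℚ) : ℝ) = ∑ i ∈ Finset.Icc 1 R, (i : ℝ)⁻¹ := by
    rw [harmonic_eq_sum_Icc]
    push_cast
    rfl
  linarith [he ▸ h]

/-- **Upper bound for power-law sums (Lemma C.2), slowly decaying case s₁ ≤ 1,
with summation range R = ⌊m^{1/s₂ + κ}⌋.** -/
theorem statement_9 (a₁ a₂ s₁ s₂ s₃ κ : ℝ) (ha₁ : 0 < a₁) (ha₂ : 0 < a₂)
    (hs₁0 : 0 < s₁) (hs₁ : s₁ ≤ 1) (hs₂ : 0 < s₂) (hs₃ : 0 < s₃) (hκ : 0 < κ) :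
    ∃ C : ℝ, 0 < C ∧ ∃ m₀ : ℝ, 1 ≤ m₀ ∧ ∀ m : ℝ, m₀ ≤ m →
      powerLawSum a₁ a₂ s₁ s₂ s₃ m (Nat.floor (m ^ (1 / s₂ + κ))) ≤
        C * (1 + Real.log m) *
          max (m ^ (-s₃)) ((Nat.floor (m ^ (1 / s₂ + κ)) : ℝ) ^ (1 - s₁)) := by
  set e₀ : ℝ := 1 / s₂ + κ with he₀
  have he₀pos : 0 < e₀ := by positivity
  refine ⟨a₁ * max 1 e₀, by positivity, 1, le_refl 1, fun m hm => ?_⟩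
  have hm0 : (0 : ℝ) < m := lt_of_lt_of_le one_pos hm
  have hlogm : 0 ≤ Real.log m := Real.log_nonneg hm
  set R : ℕ := Nat.floor (m ^ e₀) with hR
  have hRle : (R : ℝ) ≤ m ^ e₀ := Nat.floor_le (by positivity)
  have hRpow : (0 : ℝ) ≤ (R : ℝ) ^ (1 - s₁) := Real.rpow_nonneg (Nat.cast_nonneg R) _
  -- Step 1: pointwise bound on each term
  have h1 : powerLawSum a₁ a₂ s₁ s₂ s₃ m R ≤
      a₁ * (R : ℝ) ^ (1 - s₁) * ∑ i ∈ Finset.Icc 1 R, (i : ℝ)⁻¹ := by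
    rw [powerLawSum, Finset.mul_sum]
    apply Finset.sum_le_sum
    intro i hi
    obtain ⟨hi1, hiR⟩ := Finset.mem_Icc.mp hi
    have hi0 : (0 : ℝ) < (i : ℝ) := by exact_mod_cast hi1
    have hD : (1 : ℝ) ≤ (1 + a₂ * m * (i : ℝ) ^ (-s₂)) ^ s₃ := by
      apply Real.one_le_rpow _ hs₃.le
      have : (0 : ℝ) ≤ a₂ * m * (i : ℝ) ^ (-s₂) := by positivity
      linarith
    calc a₁ * (i : ℝ) ^ (-s₁) / (1 + a₂ * m * (i : ℝ) ^ (-s₂)) ^ s₃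
        ≤ a₁ * (i : ℝ) ^ (-s₁) := div_le_self (by positivity) hD
      _ = a₁ * ((i : ℝ) ^ (1 - s₁) * (i : ℝ)⁻¹) := by
          rw [← Real.rpow_neg_one (i : ℝ), ← Real.rpow_add hi0,
            show (1 : ℝ) - s₁ + -1 = -s₁ by ring]
      _ ≤ a₁ * ((R : ℝ) ^ (1 - s₁) * (i : ℝ)⁻¹) := by
          have h := Real.rpow_le_rpow hi0.le (Nat.cast_le.mpr hiR)
            (by linarith : (0:ℝ) ≤ 1 - s₁)
          have hinv : (0:ℝ) ≤ (i:ℝ)⁻¹ := by positivity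
          exact mul_le_mul_of_nonneg_left (mul_le_mul_of_nonneg_right h hinv) ha₁.le
      _ = a₁ * (R : ℝ) ^ (1 - s₁) * (i : ℝ)⁻¹ := by ring
  -- Step 2: harmonic bound and log comparison
  have h2 : ∑ i ∈ Finset.Icc 1 R, (i : ℝ)⁻¹ ≤ 1 + Real.log R := sum_inv_le_one_add_log R
  have hlogR : Real.log R ≤ e₀ * Real.log m := by
    rcases Nat.eq_zero_or_pos R with h0 | hpos
    · rw [h0]; simp; positivity
    · have : Real.log R ≤ Real.log (m ^ e₀) :=
        Real.log_le_log (by exact_mod_cast hpos) hRle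
      rwa [Real.log_rpow hm0] at this
  have h3 : 1 + Real.log R ≤ max 1 e₀ * (1 + Real.log m) := by
    have h4 : (1 : ℝ) ≤ max 1 e₀ := le_max_left 1 e₀
    have h5 : e₀ ≤ max 1 e₀ := le_max_right 1 e₀
    have h6 : e₀ * Real.log m ≤ max 1 e₀ * Real.log m := by
      apply mul_le_mul_of_nonneg_right h5 hlogm
    nlinarith
  calc powerLawSum a₁ a₂ s₁ s₂ s₃ m R
      ≤ a₁ * (R : ℝ) ^ (1 - s₁) * (1 + Real.log R) := by
        refine h1.trans ?_
        apply mul_le_mul_of_nonneg_left h2 (by positivity)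
    _ ≤ a₁ * (R : ℝ) ^ (1 - s₁) * (max 1 e₀ * (1 + Real.log m)) := by
        apply mul_le_mul_of_nonneg_left h3 (by positivity)
    _ = a₁ * max 1 e₀ * (1 + Real.log m) * (R : ℝ) ^ (1 - s₁) := by ring
    _ ≤ a₁ * max 1 e₀ * (1 + Real.log m) *
          max (m ^ (-s₃)) ((R : ℝ) ^ (1 - s₁)) := by
        apply mul_le_mul_of_nonneg_left (le_max_right _ _)
        have h7 : (0:ℝ) ≤ 1 + Real.log m := by linarith
        exact mul_nonneg (mul_nonneg ha₁.le
          (le_trans zero_le_one (le_max_left 1 e₀))) h7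
end

section
/- Let (Ω, 𝒜, ρ) be a probability space, let f ∈ L²(Ω, ρ) be measurable with ‖f‖₂² = ∫_Ω f² dρ, let n ≥ 1 and let δ ∈ (0,1). Then the set of x = (x₁,…,x_n) ∈ Ωⁿ satisfying Σ_{i=1}^n f(x_i)² ≤ max{ √((8/δ) log(2/δ)) · n ‖f‖₂², (8/(3δ)) log(2/δ) · n ‖f‖₂² } + n ‖f‖₂² has ρ^{⊗n}-measure at least 1 − δ. -/
open MeasureTheory

lemma aux_measurePreserving_eval {ι : Type*} [Fintype ι] {Ω : Type*} [MeasurableSpace Ω]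
    (ρ : Measure Ω) [IsProbabilityMeasure ρ] (i : ι) :
    MeasurePreserving (fun x : ι → Ω => x i) (Measure.pi fun _ : ι => ρ) ρ := by
  classical
  refine ⟨measurable_pi_apply i, ?_⟩
  ext s hs
  rw [Measure.map_apply (measurable_pi_apply i) hs]
  have h : (fun x : ι → Ω => x i) ⁻¹' s
      = Set.pi Set.univ (Function.update (fun _ => Set.univ) i s) := Set.eval_preimage
  rw [h, Measure.pi_pi]
  rw [Finset.prod_eq_single i]
  · simp
  · intro j _ hj; simp [Function.update_of_ne hj]
  · simp

/-- **Concentration of the empirical squared L²-norm (Lemma C.3).**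
For f ∈ L²(ρ) and i.i.d. samples x₁,…,x_n ∼ ρ, with probability at least 1 − δ,
Σᵢ f(xᵢ)² ≤ max{ √((8/δ) log(2/δ)) n‖f‖₂², (8/(3δ)) log(2/δ) n‖f‖₂² } + n‖f‖₂². -/
theorem statement_10 {Ω : Type*} [MeasurableSpace Ω] (ρ : Measure Ω)
    [IsProbabilityMeasure ρ]
    (f : Ω → ℝ) (hfmeas : Measurable f) (hfL2 : MemLp f 2 ρ)
    (n : ℕ) (hn : 1 ≤ n) (δ : ℝ) (hδ0 : 0 < δ) (hδ1 : δ < 1) :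
    ENNReal.ofReal (1 - δ) ≤
      (Measure.pi fun _ : Fin n => ρ)
        {x : Fin n → Ω |
          ∑ i, f (x i) ^ 2 ≤
            max (Real.sqrt ((8 / δ) * Real.log (2 / δ)) * (n * ∫ z, f z ^ 2 ∂ρ))
                ((8 / (3 * δ)) * Real.log (2 / δ) * (n * ∫ z, f z ^ 2 ∂ρ))
              + n * ∫ z, f z ^ 2 ∂ρ} := by
  classical
  set μ : Measure (Fin n → Ω) := Measure.pi fun _ : Fin n => ρ with hμdef
  set I : ℝ := ∫ z, f z ^ 2 ∂ρ with hIdef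
  set M : ℝ := max (Real.sqrt ((8 / δ) * Real.log (2 / δ)) * (n * I))
      ((8 / (3 * δ)) * Real.log (2 / δ) * (n * I)) with hMdef
  set g : (Fin n → Ω) → ℝ := fun x => ∑ i, f (x i) ^ 2 with hgdef
  set S : Set (Fin n → Ω) := {x | g x ≤ M + n * I} with hSdef
  have hsq : Integrable (fun z => f z ^ 2) ρ := hfL2.integrable_sq
  have hI0 : 0 ≤ I := integral_nonneg fun z => sq_nonneg _
  have hmp : ∀ i : Fin n, MeasurePreserving (fun x : Fin n → Ω => x i) μ ρ :=
    fun i => aux_measurePreserving_eval ρ i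
  have hint : Integrable g μ := by
    refine integrable_finset_sum _ fun i _ => ?_
    exact ((hmp i).integrable_comp hsq.aestronglyMeasurable).2 hsq
  have hieq : ∀ i : Fin n, ∫ x, f (x i) ^ 2 ∂μ = I := by
    intro i
    rw [hIdef, ← (hmp i).map_eq,
      integral_map (measurable_pi_apply i).aemeasurable
        (by rw [(hmp i).map_eq]; exact hsq.aestronglyMeasurable)]
  have hintg : ∫ x, g x ∂μ = n * I := by
    have h := integral_finset_sum (μ := μ) Finset.univ
      (f := fun (i : Fin n) (x : Fin n → Ω) => f (x i) ^ 2)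
      (fun i _ => ((hmp i).integrable_comp hsq.aestronglyMeasurable).2 hsq)
    simp only [hgdef]
    rw [h]
    simp [hieq, Finset.sum_const, nsmul_eq_mul]
  have hlog : (3 : ℝ) / 8 ≤ Real.log (2 / δ) := by
    have h2 : (2 : ℝ) ≤ 2 / δ := by
      rw [le_div_iff₀ hδ0]; nlinarith
    have := Real.log_le_log (by norm_num) h2
    have h1 := Real.log_two_gt_d9
    linarith
  -- the complement estimate
  have hcompl : μ Sᶜ ≤ ENNReal.ofReal δ := by
    rcases eq_or_lt_of_le hI0 with hIz | hIpos
    · -- I = 0 : f² = 0 a.e., so g = 0 a.e. and the complement is null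
      have hf0 : (fun z => f z ^ 2) =ᵐ[ρ] 0 := by
        rw [← integral_eq_zero_iff_of_nonneg (fun z => sq_nonneg _) hsq]
        exact hIz.symm
      have hf0' : ∀ᵐ z ∂ρ, f z ^ 2 = 0 := by
        filter_upwards [hf0] with z hz using hz
      have hg0 : ∀ᵐ x ∂μ, ∀ i : Fin n, f (x i) ^ 2 = 0 := by
        rw [hμdef]
        refine Filter.eventually_all.2 fun i => ?_
        exact Filter.Tendsto.eventually
          (Measure.tendsto_eval_ae_ae (μ := fun _ : Fin n => ρ) (i := i)) hf0'
      have : μ Sᶜ = 0 := by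
        refine measure_mono_null ?_ (ae_iff.1 hg0)
        intro x hx
        simp only [Set.mem_compl_iff, hSdef, Set.mem_setOf_eq, not_le] at hx
        intro hall
        apply absurd hx
        push_neg
        have : g x = 0 := by
          rw [hgdef]; exact Finset.sum_eq_zero fun i _ => hall i
        rw [this]
        have : (n : ℝ) * I = 0 := by rw [← hIz]; ring
        rw [hMdef, ← hIz]
        simp
      simp [this]
    · -- I > 0 : Markov's inequality at level n·I/δ
      have hnI : (0 : ℝ) < n * I := by
        have : (1 : ℝ) ≤ n := by exact_mod_cast hn
        nlinarith
      set c : ℝ := n * I / δ with hcdef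
      have hc0 : 0 < c := div_pos hnI hδ0
      have hsub : Sᶜ ⊆ {x | c ≤ g x} := by
        intro x hx
        simp only [Set.mem_compl_iff, hSdef, Set.mem_setOf_eq, not_le] at hx
        have hM2 : (1 / δ) * (n * I) ≤ M := by
          refine le_max_of_le_right ?_
          have h83 : (1 : ℝ) / δ ≤ 8 / (3 * δ) * Real.log (2 / δ) := by
            rw [div_le_iff₀ hδ0] at *
            have : 8 / (3 * δ) * (3 / 8) ≤ 8 / (3 * δ) * Real.log (2 / δ) := by
              apply mul_le_mul_of_nonneg_left hlog
              positivity
            calc (1 : ℝ) = 8 / (3 * δ) * (3 / 8) * δ := by field_simp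
              _ ≤ 8 / (3 * δ) * Real.log (2 / δ) * δ := by nlinarith
          nlinarith
        have : c ≤ M + n * I := by
          rw [hcdef, div_le_iff₀ hδ0]
          have h1 : (1 / δ) * (n * I) * δ = n * I := by field_simp
          nlinarith [mul_le_mul_of_nonneg_right hM2 hδ0.le]
        exact le_of_lt (lt_of_le_of_lt this hx)
      have hmarkov := mul_meas_ge_le_integral_of_nonneg
        (Filter.Eventually.of_forall fun x =>
          Finset.sum_nonneg fun i _ => sq_nonneg (f (x i))) hint c
      rw [hintg] at hmarkov
      have htr : (μ {x | c ≤ g x}).toReal ≤ δ := by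
        rw [← le_div_iff₀' hc0] at hmarkov
        calc (μ {x | c ≤ g x}).toReal ≤ n * I / c := hmarkov
          _ = δ := by rw [hcdef]; field_simp
      calc μ Sᶜ ≤ μ {x | c ≤ g x} := measure_mono hsub
        _ = ENNReal.ofReal ((μ {x | c ≤ g x}).toReal) :=
            (ENNReal.ofReal_toReal (measure_ne_top μ _)).symm
        _ ≤ ENNReal.ofReal δ := ENNReal.ofReal_le_ofReal htr
  have h1 : (1 : ENNReal) ≤ μ S + μ Sᶜ := by
    have huniv : μ Set.univ = 1 := measure_univ
    rw [← huniv, ← Set.union_compl_self S]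
    exact measure_union_le S Sᶜ
  calc ENNReal.ofReal (1 - δ) = 1 - ENNReal.ofReal δ := by
        rw [ENNReal.ofReal_sub _ hδ0.le, ENNReal.ofReal_one]
    _ ≤ μ S := tsub_le_iff_right.2 (h1.trans (add_le_add_right hcompl _))
end

section
/- Let n ≥ 1, R ≥ 0, let Λ = diag(ℓ₀, ℓ₁,…,ℓ_R) ∈ ℝ^{(R+1)×(R+1)} with all ℓ_p ≥ 0, let Φ ∈ ℝ^{n×(R+1)}, and let σ > 0. Assume that ‖ (1/σ²) (I + (n/σ²)Λ)^{−1/2} Λ^{1/2} (ΦᵀΦ − nI) Λ^{1/2} (I + (n/σ²)Λ)^{−1/2} ‖₂ < 1. Then the matrix I + (1/σ²) Λ ΦᵀΦ is invertible and (I + (1/σ²) Λ ΦᵀΦ)^{−1} = (I + (n/σ²)Λ)^{−1} + Σ_{j=1}^{∞} (−1)^j [ (1/σ²) (I + (n/σ²)Λ)^{−1} Λ (ΦᵀΦ − nI) ]^j (I + (n/σ²)Λ)^{−1}, where the series converges in operator norm. -/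
open Matrix

/-- The spectral (l2 operator) norm of a square real matrix. -/
noncomputable def opNorm {k : ℕ} (A : Matrix (Fin k) (Fin k) ℝ) : ℝ :=
  ‖Matrix.toEuclideanCLM (𝕜 := ℝ) A‖

section Aux
open scoped Matrix.Norms.L2Operator

theorem statement_16_aux (n R : ℕ) (hn : 1 ≤ n)
    (ℓ : Fin (R + 1) → ℝ) (hℓ : ∀ p, 0 ≤ ℓ p)
    (Φ : Matrix (Fin n) (Fin (R + 1)) ℝ) (σ : ℝ) (hσ : 0 < σ)
    (hcontr : opNorm ((σ ^ 2)⁻¹ •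
        (Matrix.diagonal (fun p => (1 + ((n : ℝ) / σ ^ 2) * ℓ p) ^ (-(1 : ℝ) / 2)) *
          Matrix.diagonal (fun p => Real.sqrt (ℓ p)) *
          (Φᵀ * Φ - (n : ℝ) • (1 : Matrix (Fin (R + 1)) (Fin (R + 1)) ℝ)) *
          Matrix.diagonal (fun p => Real.sqrt (ℓ p)) *
          Matrix.diagonal (fun p => (1 + ((n : ℝ) / σ ^ 2) * ℓ p) ^ (-(1 : ℝ) / 2)))) < 1) :
    IsUnit ((1 : Matrix (Fin (R + 1)) (Fin (R + 1)) ℝ) +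
        (σ ^ 2)⁻¹ • (Matrix.diagonal ℓ * (Φᵀ * Φ))) ∧
    HasSum
      (fun j : ℕ =>
        ((-1 : ℝ) ^ (j + 1)) •
          (((σ ^ 2)⁻¹ •
              ((1 + ((n : ℝ) / σ ^ 2) • Matrix.diagonal ℓ)⁻¹ * Matrix.diagonal ℓ *
                (Φᵀ * Φ - (n : ℝ) • (1 : Matrix (Fin (R + 1)) (Fin (R + 1)) ℝ)))) ^ (j + 1) *
            (1 + ((n : ℝ) / σ ^ 2) • Matrix.diagonal ℓ)⁻¹))
      (((1 : Matrix (Fin (R + 1)) (Fin (R + 1)) ℝ) +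
          (σ ^ 2)⁻¹ • (Matrix.diagonal ℓ * (Φᵀ * Φ)))⁻¹ -
        (1 + ((n : ℝ) / σ ^ 2) • Matrix.diagonal ℓ)⁻¹) := by
  classical
  set c : ℝ := (σ ^ 2)⁻¹ with hc
  set m : Fin (R + 1) → ℝ := fun p => 1 + ((n : ℝ) / σ ^ 2) * ℓ p with hm_def
  have hm : ∀ p, 0 < m p := by
    intro p
    have h1 : 0 ≤ ((n : ℝ) / σ ^ 2) * ℓ p := mul_nonneg (by positivity) (hℓ p)
    simp only [hm_def]; linarith
  set D : Matrix (Fin (R + 1)) (Fin (R + 1)) ℝ := Matrix.diagonal ℓ with hD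
  set E : Matrix (Fin (R + 1)) (Fin (R + 1)) ℝ :=
    Φᵀ * Φ - (n : ℝ) • (1 : Matrix (Fin (R + 1)) (Fin (R + 1)) ℝ) with hE
  set Mm : Matrix (Fin (R + 1)) (Fin (R + 1)) ℝ :=
    1 + ((n : ℝ) / σ ^ 2) • D with hMm
  have hMdiag : Mm = Matrix.diagonal m := by
    rw [hMm, hD, ← Matrix.diagonal_one, ← Matrix.diagonal_smul, Matrix.diagonal_add]
    rfl
  have hMinv : Mm⁻¹ = Matrix.diagonal (fun p => (m p)⁻¹) := by
    apply Matrix.inv_eq_right_inv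
    rw [hMdiag, Matrix.diagonal_mul_diagonal]
    have hfun : (fun i => m i * (m i)⁻¹) = fun _ : Fin (R + 1) => (1 : ℝ) :=
      funext fun p => mul_inv_cancel₀ (hm p).ne'
    rw [hfun, Matrix.diagonal_one]
  set q : Fin (R + 1) → ℝ := fun p => (m p) ^ (-(1 : ℝ) / 2) with hq
  have hqq : ∀ p, q p * q p = (m p)⁻¹ := by
    intro p
    rw [hq]
    rw [← Real.rpow_add (hm p)]
    norm_num [Real.rpow_neg_one]
  set P : Matrix (Fin (R + 1)) (Fin (R + 1)) ℝ :=
    Matrix.diagonal (fun p => Real.sqrt (ℓ p) * q p) with hP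
  have hPP : Mm⁻¹ * D = P * P := by
    rw [hMinv, hD, hP, Matrix.diagonal_mul_diagonal, Matrix.diagonal_mul_diagonal]
    refine congrArg Matrix.diagonal (funext fun p => ?_)
    rw [mul_mul_mul_comm, Real.mul_self_sqrt (hℓ p), hqq p]
    exact mul_comm _ _
  set Z : Matrix (Fin (R + 1)) (Fin (R + 1)) ℝ := c • (P * E) with hZ
  set S : Matrix (Fin (R + 1)) (Fin (R + 1)) ℝ := c • (P * E * P) with hS
  have hZP : Z * P = S := by rw [hZ, hS, smul_mul_assoc]
  have hSnorm : ‖S‖ < 1 := by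
    have key : c •
        (Matrix.diagonal q *
          Matrix.diagonal (fun p => Real.sqrt (ℓ p)) * E *
          Matrix.diagonal (fun p => Real.sqrt (ℓ p)) *
          Matrix.diagonal q) = S := by
      rw [hS, hP]
      congr 1
      rw [Matrix.diagonal_mul_diagonal, mul_assoc, Matrix.diagonal_mul_diagonal]
      congr 2
      exact congrArg Matrix.diagonal (funext fun p => mul_comm _ _)
    rw [← key]
    exact hcontr
  set B : Matrix (Fin (R + 1)) (Fin (R + 1)) ℝ := c • (Mm⁻¹ * D * E) with hB
  have hBZ : B = P * Z := by
    rw [hB, hZ, hPP, mul_assoc, mul_smul_comm]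
  have hpow : ∀ j : ℕ, B ^ (j + 1) = P * S ^ j * Z := by
    intro j
    induction j with
    | zero => simp [hBZ, mul_assoc]
    | succ j ih =>
      rw [pow_succ, ih, hBZ, pow_succ, ← hZP]
      simp only [mul_assoc]
  have hSj : ∀ j : ℕ, ‖S ^ j‖ ≤ ‖S‖ ^ j := by
    intro j
    induction j with
    | zero => simp
    | succ j ih =>
      rw [pow_succ, pow_succ]
      calc ‖S ^ j * S‖ ≤ ‖S ^ j‖ * ‖S‖ := norm_mul_le _ _
        _ ≤ ‖S‖ ^ j * ‖S‖ := mul_le_mul_of_nonneg_right ih (norm_nonneg _)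
  have hbound : ∀ j : ℕ, ‖B ^ (j + 1)‖ ≤ ‖P‖ * ‖S‖ ^ j * ‖Z‖ := by
    intro j
    rw [hpow j]
    calc ‖P * S ^ j * Z‖ ≤ ‖P * S ^ j‖ * ‖Z‖ := norm_mul_le _ _
      _ ≤ ‖P‖ * ‖S ^ j‖ * ‖Z‖ :=
          mul_le_mul_of_nonneg_right (norm_mul_le _ _) (norm_nonneg _)
      _ ≤ ‖P‖ * ‖S‖ ^ j * ‖Z‖ :=
          mul_le_mul_of_nonneg_right
            (mul_le_mul_of_nonneg_left (hSj j) (norm_nonneg _)) (norm_nonneg _)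
  have hSgeom : Summable (fun j : ℕ => ‖P‖ * ‖S‖ ^ j * ‖Z‖) := by
    have h0 : Summable (fun j : ℕ => ‖S‖ ^ j) :=
      summable_geometric_of_lt_one (norm_nonneg _) hSnorm
    exact (h0.mul_left ‖P‖).mul_right ‖Z‖
  set g : ℕ → Matrix (Fin (R + 1)) (Fin (R + 1)) ℝ := fun j => (-B) ^ j with hg
  have hgsucc : ∀ j : ℕ, g (j + 1) = ((-1 : ℝ) ^ (j + 1)) • B ^ (j + 1) := by
    intro j
    have hneg : (-B) = (-1 : ℝ) • B := by simp
    rw [hg]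
    simp only
    rw [hneg, smul_pow]
  have hgsum : Summable g := by
    rw [← summable_nat_add_iff 1]
    apply Summable.of_norm_bounded hSgeom
    intro j
    calc ‖g (j + 1)‖ = ‖B ^ (j + 1)‖ := by rw [hgsucc j, norm_smul]; simp
      _ ≤ ‖P‖ * ‖S‖ ^ j * ‖Z‖ := hbound j
  obtain ⟨T, hT⟩ := hgsum
  have hshift : HasSum (fun j => g (j + 1)) (T - g 0) := by
    have h := (hasSum_nat_add_iff' (f := g) (g := T) 1).2 hT
    simpa using h
  have hg0 : g 0 = 1 := by rw [hg]; simp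
  have htel : HasSum (fun j => g j - g (j + 1)) (T - (T - g 0)) := hT.sub hshift
  have hkey : ∀ j : ℕ, (1 + B) * g j = g j - g (j + 1) := by
    intro j
    rw [hg]
    simp only
    rw [add_mul, one_mul, pow_succ']
    rw [show B * (-B) ^ j = -((-B) * (-B) ^ j) by rw [neg_mul, neg_neg]]
    abel
  have hkey' : ∀ j : ℕ, g j * (1 + B) = g j - g (j + 1) := by
    intro j
    rw [hg]
    simp only
    rw [mul_add, mul_one, pow_succ]
    rw [show (-B) ^ j * B = -((-B) ^ j * (-B)) by rw [mul_neg, neg_neg]]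
    abel
  have hleft : (1 + B) * T = 1 := by
    have h1 : HasSum (fun j => (1 + B) * g j) ((1 + B) * T) := hT.mul_left _
    have h2 := htel
    simp only [← hkey] at h2
    have h3 := h1.unique h2
    rw [h3, hg0]
    abel
  have hright : T * (1 + B) = 1 := by
    have h1 : HasSum (fun j => g j * (1 + B)) (T * (1 + B)) := hT.mul_right _
    have h2 := htel
    simp only [← hkey'] at h2
    have h3 := h1.unique h2
    rw [h3, hg0]
    abel
  have hUnitIB : IsUnit (1 + B) := ⟨⟨1 + B, T, hleft, hright⟩, rfl⟩
  have hMdet : IsUnit Mm.det := by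
    rw [hMdiag, Matrix.det_diagonal]
    exact (Finset.prod_pos (fun p _ => hm p)).ne'.isUnit
  have hMunit : IsUnit Mm := (Matrix.isUnit_iff_isUnit_det Mm).2 hMdet
  have hMMinv : Mm * Mm⁻¹ = 1 := Matrix.mul_nonsing_inv _ hMdet
  set A : Matrix (Fin (R + 1)) (Fin (R + 1)) ℝ :=
    1 + c • (D * (Φᵀ * Φ)) with hA
  have hfact : A = Mm * (1 + B) := by
    have hMB : Mm * B = c • (D * E) := by
      rw [hB, mul_smul_comm, ← mul_assoc, ← mul_assoc, hMMinv, one_mul]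
    rw [mul_add, mul_one, hMB, hA, hE, mul_sub, Matrix.mul_smul, mul_one, smul_sub, hMm]
    have hns : ((n : ℝ) / σ ^ 2) • D = c • ((n : ℝ) • D) := by
      rw [smul_smul, hc, div_eq_mul_inv, mul_comm]
    rw [hns]
    abel
  have hAunit : IsUnit A := by rw [hfact]; exact hMunit.mul hUnitIB
  have hAinv : A⁻¹ = T * Mm⁻¹ := by
    apply Matrix.inv_eq_right_inv
    rw [hfact, mul_assoc, ← mul_assoc (1 + B) T, hleft, one_mul, hMMinv]
  constructor
  · exact hAunit
  · have h2 := hshift.mul_right Mm⁻¹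
    rw [hg0] at h2
    have heq : (fun j => g (j + 1) * Mm⁻¹)
        = fun j => ((-1 : ℝ) ^ (j + 1)) • (B ^ (j + 1) * Mm⁻¹) := by
      funext j
      rw [hgsucc j, smul_mul_assoc]
    rw [heq] at h2
    have hval : (T - 1) * Mm⁻¹ = A⁻¹ - Mm⁻¹ := by
      rw [hAinv, sub_mul, one_mul]
    rw [hval] at h2
    exact h2

end Aux

/-- **Neumann expansion of the resolvent around its population version (Lemma C.10).**
Under the contractivity condition on the symmetrically weighted fluctuation ΦᵀΦ − nI,
the matrix I + (1/σ²)ΛΦᵀΦ is invertible and its inverse is given by the stated series,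
convergent in operator norm (i.e. in the finite-dimensional matrix topology). -/
theorem statement_16 (n R : ℕ) (hn : 1 ≤ n)
    (ℓ : Fin (R + 1) → ℝ) (hℓ : ∀ p, 0 ≤ ℓ p)
    (Φ : Matrix (Fin n) (Fin (R + 1)) ℝ) (σ : ℝ) (hσ : 0 < σ)
    (hcontr : opNorm ((σ ^ 2)⁻¹ •
        (Matrix.diagonal (fun p => (1 + ((n : ℝ) / σ ^ 2) * ℓ p) ^ (-(1 : ℝ) / 2)) *
          Matrix.diagonal (fun p => Real.sqrt (ℓ p)) *
          (Φᵀ * Φ - (n : ℝ) • (1 : Matrix (Fin (R + 1)) (Fin (R + 1)) ℝ)) *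
          Matrix.diagonal (fun p => Real.sqrt (ℓ p)) *
          Matrix.diagonal (fun p => (1 + ((n : ℝ) / σ ^ 2) * ℓ p) ^ (-(1 : ℝ) / 2)))) < 1) :
    IsUnit ((1 : Matrix (Fin (R + 1)) (Fin (R + 1)) ℝ) +
        (σ ^ 2)⁻¹ • (Matrix.diagonal ℓ * (Φᵀ * Φ))) ∧
    HasSum
      (fun j : ℕ =>
        ((-1 : ℝ) ^ (j + 1)) •
          (((σ ^ 2)⁻¹ •
              ((1 + ((n : ℝ) / σ ^ 2) • Matrix.diagonal ℓ)⁻¹ * Matrix.diagonal ℓ *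
                (Φᵀ * Φ - (n : ℝ) • (1 : Matrix (Fin (R + 1)) (Fin (R + 1)) ℝ)))) ^ (j + 1) *
            (1 + ((n : ℝ) / σ ^ 2) • Matrix.diagonal ℓ)⁻¹))
      (((1 : Matrix (Fin (R + 1)) (Fin (R + 1)) ℝ) +
          (σ ^ 2)⁻¹ • (Matrix.diagonal ℓ * (Φᵀ * Φ)))⁻¹ -
        (1 + ((n : ℝ) / σ ^ 2) • Matrix.diagonal ℓ)⁻¹) :=
  statement_16_aux n R hn ℓ hℓ Φ σ hσ hcontr
end

section
/- Let n ≥ 1, R ≥ 0, let Λ = diag(ℓ₀, ℓ₁,…,ℓ_R) ∈ ℝ^{(R+1)×(R+1)} with all ℓ_p ≥ 0, let Φ ∈ ℝ^{n×(R+1)}, let μ ∈ ℝ^{R+1} and let σ > 0. Assume that ‖ (1/σ²) (I + (n/σ²)Λ)^{−1/2} Λ^{1/2} (ΦᵀΦ − nI) Λ^{1/2} (I + (n/σ²)Λ)^{−1/2} ‖₂ < 1. Then Iₙ + (1/σ²) Φ Λ Φᵀ is invertible and (1/(2σ²)) μᵀ Φᵀ (Iₙ + (1/σ²) Φ Λ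 Φᵀ)^{−1} Φ μ = (n/(2σ²)) μᵀ (I + (n/σ²)Λ)^{−1} μ + ½ Σ_{j=1}^{∞} (−1)^{j+1} E_j, where E_j = μᵀ (1/σ²) (I + (n/σ²)Λ)^{−1} (ΦᵀΦ − nI) [ (1/σ²) (I + (n/σ²)Λ)^{−1} Λ (ΦᵀΦ − nI) ]^{j−1} (I + (n/σ²)Λ)^{−1} μ, and the series converges absolutely. -/
/-!
Write `B = I + (n/σ²)Λ`, `Δ = ΦᵀΦ - nI` and `M = σ⁻² B⁻¹ΛΔ`. The push-through identity
`Φᵀ (I + σ⁻²ΦΛΦᵀ)⁻¹ Φ = ΦᵀΦ (I + σ⁻²ΛΦᵀΦ)⁻¹` and the factorisation `I + σ⁻²ΛΦᵀΦ = B (I + M)` give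
`Φᵀ (I + σ⁻²ΦΛΦᵀ)⁻¹ Φ = n B⁻¹ + B⁻¹ Δ (I + M)⁻¹ B⁻¹`.
Since `B⁻¹Λ = C²` for the diagonal `C = B^{-1/2} Λ^{1/2}`, we have `M = C X` with `X = σ⁻² C Δ`,
and `X C` is the matrix of the hypothesis. So `‖M ^ (j + 1)‖ ≤ ‖C‖ ‖X‖ ‖X C‖ ^ j` decays
geometrically even though `‖M‖` itself need not be below `1`, the Neumann series `∑ (-M) ^ j`
converges absolutely to `(I + M)⁻¹`, and expanding it inside the quadratic form gives the
series of the `E_j`.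
-/

open Matrix

/-- The j-th term (for j : ℕ corresponding to the paper's index j+1) of the series in
the decomposition of the data-fit term:
E_{j+1} = μᵀ (1/σ²) B⁻¹ (ΦᵀΦ−nI) [ (1/σ²) B⁻¹ Λ (ΦᵀΦ−nI) ]^j B⁻¹ μ,
where B = I + (n/σ²)Λ. -/
noncomputable def Eterm {n R : ℕ} (ℓ : Fin (R + 1) → ℝ)
    (Φ : Matrix (Fin n) (Fin (R + 1)) ℝ) (μv : Fin (R + 1) → ℝ) (σ : ℝ) (j : ℕ) : ℝ :=
  μv ⬝ᵥ
    ((((σ ^ 2)⁻¹ •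
          ((1 + ((n : ℝ) / σ ^ 2) • Matrix.diagonal ℓ)⁻¹ *
            (Φᵀ * Φ - (n : ℝ) • (1 : Matrix (Fin (R + 1)) (Fin (R + 1)) ℝ)))) *
        (((σ ^ 2)⁻¹ •
            ((1 + ((n : ℝ) / σ ^ 2) • Matrix.diagonal ℓ)⁻¹ * Matrix.diagonal ℓ *
              (Φᵀ * Φ - (n : ℝ) • (1 : Matrix (Fin (R + 1)) (Fin (R + 1)) ℝ)))) ^ j) *
        (1 + ((n : ℝ) / σ ^ 2) • Matrix.diagonal ℓ)⁻¹) *ᵥ μv)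

theorem summable_norm_pow_mul_of_norm_mul_lt_one {A : Type*} [NormedRing A] {c x : A}
    (h : ‖x * c‖ < 1) : Summable fun j : ℕ => ‖(c * x) ^ j‖ := by
  have hpow (j : ℕ) : (c * x) ^ (j + 2) = c * (x * c) ^ (j + 1) * x := by
    rw [pow_succ, ← mul_assoc, mul_pow_mul]
  refine (summable_nat_add_iff 2).1 <| .of_nonneg_of_le (fun _ => norm_nonneg _) (fun j => ?_)
    ((summable_geometric_of_lt_one (norm_nonneg _) h).mul_left (‖c‖ * ‖x‖ * ‖x * c‖))
  calc ‖(c * x) ^ (j + 2)‖ ≤ ‖c‖ * ‖(x * c) ^ (j + 1)‖ * ‖x‖ := by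
        rw [hpow]
        exact (norm_mul_le _ _).trans (by gcongr; exact norm_mul_le _ _)
    _ ≤ ‖c‖ * ‖x * c‖ ^ (j + 1) * ‖x‖ := by gcongr; exact norm_pow_le' _ j.succ_pos
    _ = ‖c‖ * ‖x‖ * ‖x * c‖ * ‖x * c‖ ^ j := by ring

theorem Real.rpow_neg_half_mul_sqrt_mul_self {x y : ℝ} (hx : 0 < x) (hy : 0 ≤ y) :
    x ^ (-(1 : ℝ) / 2) * √y * (x ^ (-(1 : ℝ) / 2) * √y) = x⁻¹ * y := by
  calc x ^ (-(1 : ℝ) / 2) * √y * (x ^ (-(1 : ℝ) / 2) * √y)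
      = x ^ (-(1 : ℝ) / 2 + -(1 : ℝ) / 2) * (√y * √y) := by rw [rpow_add hx]; ring
    _ = x⁻¹ * y := by norm_num [rpow_neg_one, mul_self_sqrt hy]

theorem Matrix.one_add_smul_diagonal {k R : Type*} [DecidableEq k] [Semiring R] (w : R)
    (d : k → R) : 1 + w • diagonal d = diagonal fun p => 1 + w * d p := by
  rw [← diagonal_one, ← diagonal_smul, diagonal_add]
  rfl

theorem Matrix.mulVec_dotProduct_mulVec_mulVec {m k R : Type*} [Fintype m] [Fintype k]
    [CommSemiring R] (A : Matrix m k R) (G : Matrix m m R) (v : k → R) :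
    (A *ᵥ v) ⬝ᵥ (G *ᵥ (A *ᵥ v)) = v ⬝ᵥ ((Aᵀ * G * A) *ᵥ v) := by
  conv_rhs => rw [← mulVec_mulVec, ← mulVec_mulVec, dotProduct_mulVec, vecMul_transpose]

theorem Matrix.inv_one_add_mul_mul {m k R : Type*} [Fintype m] [Fintype k] [DecidableEq m]
    [DecidableEq k] [CommRing R] (A : Matrix m k R) (B : Matrix k m R) :
    (1 + A * B)⁻¹ * A = A * (1 + B * A)⁻¹ := by
  by_cases h : IsUnit (1 + B * A).det
  · have h' : IsUnit (1 + A * B).det := by rwa [det_one_add_mul_comm]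
    have hpush : (1 + A * B) * A = A * (1 + B * A) := by
      rw [Matrix.add_mul, Matrix.mul_add, Matrix.one_mul, Matrix.mul_one, Matrix.mul_assoc]
    calc (1 + A * B)⁻¹ * A = (1 + A * B)⁻¹ * (A * (1 + B * A)) * (1 + B * A)⁻¹ := by
          rw [Matrix.mul_assoc, Matrix.mul_assoc, mul_nonsing_inv _ h, Matrix.mul_one]
      _ = A * (1 + B * A)⁻¹ := by
          rw [← hpush, ← Matrix.mul_assoc, nonsing_inv_mul _ h', Matrix.one_mul]
  · have h' : ¬IsUnit (1 + A * B).det := by rwa [det_one_add_mul_comm]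
    rw [nonsing_inv_apply_not_isUnit _ h, nonsing_inv_apply_not_isUnit _ h', Matrix.zero_mul,
      Matrix.mul_zero]

section

variable {m k K : Type*} [Fintype m] [Fintype k] [DecidableEq m] [DecidableEq k] [Field K]
  {D B : Matrix k k K} {ν s : K}

theorem Matrix.one_add_smul_mul_eq_mul_one_add (hB : B = 1 + (ν / s) • D) (hBu : IsUnit B)
    (X : Matrix k k K) : 1 + s⁻¹ • (D * X) = B * (1 + s⁻¹ • (B⁻¹ * D * (X - ν • 1))) := by
  rw [Matrix.mul_add, Matrix.mul_one, Matrix.mul_smul, ← Matrix.mul_assoc, ← Matrix.mul_assoc,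
    mul_nonsing_inv _ ((isUnit_iff_isUnit_det _).1 hBu), Matrix.one_mul, Matrix.mul_sub,
    Matrix.mul_smul, Matrix.mul_one, hB]
  module

theorem Matrix.isUnit_and_transpose_mul_inv_one_add_mul_mul (Φ : Matrix m k K)
    {Δ M : Matrix k k K} (hB : B = 1 + (ν / s) • D) (hΔ : Δ = Φᵀ * Φ - ν • 1)
    (hM : M = s⁻¹ • (B⁻¹ * D * Δ)) (hBu : IsUnit B) (hMu : IsUnit (1 + M)) :
    IsUnit (1 + s⁻¹ • (Φ * D * Φᵀ)) ∧
      Φᵀ * (1 + s⁻¹ • (Φ * D * Φᵀ))⁻¹ * Φ = ν • B⁻¹ + B⁻¹ * Δ * (1 + M)⁻¹ * B⁻¹ := by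
  have hG : 1 + s⁻¹ • (Φ * D * Φᵀ) = 1 + Φ * (s⁻¹ • (D * Φᵀ)) := by
    rw [Matrix.mul_smul, Matrix.mul_assoc]
  have hfac : 1 + s⁻¹ • (D * Φᵀ) * Φ = B * (1 + M) := by
    rw [Matrix.smul_mul, Matrix.mul_assoc, one_add_smul_mul_eq_mul_one_add hB hBu, hM, hΔ]
  have hNu : IsUnit (B * (1 + M)).det := (isUnit_iff_isUnit_det _).1 (hBu.mul hMu)
  have hBinvB : B⁻¹ * B = 1 := nonsing_inv_mul B ((isUnit_iff_isUnit_det _).1 hBu)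
  have hBinv : B⁻¹ + (ν / s) • (B⁻¹ * D) = 1 :=
    calc B⁻¹ + (ν / s) • (B⁻¹ * D) = B⁻¹ * (1 + (ν / s) • D) := by
          rw [Matrix.mul_add, Matrix.mul_one, Matrix.mul_smul]
      _ = 1 := by rw [← hB, hBinvB]
  have hright : (ν • B⁻¹ + B⁻¹ * Δ * (1 + M)⁻¹ * B⁻¹) * (B * (1 + M)) = Φᵀ * Φ :=
    calc (ν • B⁻¹ + B⁻¹ * Δ * (1 + M)⁻¹ * B⁻¹) * (B * (1 + M))
        = ν • (B⁻¹ * B * (1 + M)) + B⁻¹ * Δ * ((1 + M)⁻¹ * (B⁻¹ * B) * (1 + M)) := by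
          simp only [Matrix.add_mul, Matrix.smul_mul, Matrix.mul_assoc]
      _ = ν • 1 + (B⁻¹ + (ν / s) • (B⁻¹ * D)) * Δ := by
          rw [hBinvB, Matrix.one_mul, Matrix.mul_one,
            nonsing_inv_mul _ ((isUnit_iff_isUnit_det _).1 hMu), Matrix.mul_one, hM,
            Matrix.add_mul, Matrix.smul_mul]
          module
      _ = Φᵀ * Φ := by rw [hBinv, Matrix.one_mul, hΔ, add_sub_cancel]
  refine ⟨?_, ?_⟩
  · rw [hG, isUnit_iff_isUnit_det, det_one_add_mul_comm, hfac]
    exact hNu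
  · calc Φᵀ * (1 + s⁻¹ • (Φ * D * Φᵀ))⁻¹ * Φ = Φᵀ * Φ * (B * (1 + M))⁻¹ := by
          rw [hG, Matrix.mul_assoc, inv_one_add_mul_mul, hfac, Matrix.mul_assoc]
      _ = ν • B⁻¹ + B⁻¹ * Δ * (1 + M)⁻¹ * B⁻¹ := by
          rw [← hright, Matrix.mul_assoc, mul_nonsing_inv _ hNu, Matrix.mul_one]

end

section L2

open scoped Matrix.Norms.L2Operator

variable {k : Type*} [Fintype k] [DecidableEq k]

theorem Matrix.isUnit_one_add_and_hasSum_neg_pow {M : Matrix k k ℝ}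
    (h : Summable fun j : ℕ => ‖M ^ j‖) :
    IsUnit (1 + M) ∧ HasSum (fun j : ℕ => (-M) ^ j) (1 + M)⁻¹ := by
  have hneg : Summable fun j : ℕ => (-M) ^ j := by
    refine .of_norm (h.congr fun j => Eq.symm ?_)
    rw [← neg_one_smul ℝ M, smul_pow, norm_smul, norm_pow (-1 : ℝ), norm_neg, norm_one, one_pow,
      one_mul]
  have hinv : (1 + M) * ∑' j : ℕ, (-M) ^ j = 1 := by
    rw [← sub_neg_eq_add]
    exact hneg.one_sub_mul_tsum_pow
  refine ⟨?_, ?_⟩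
  · exact IsUnit.of_mul_eq_one _ hinv
  · rw [inv_eq_right_inv hinv]; exact hneg.hasSum

theorem Matrix.summable_abs_and_hasSum_dotProduct_mulVec {M : Matrix k k ℝ}
    (h : Summable fun j : ℕ => ‖M ^ j‖) (P Q : Matrix k k ℝ) (u v : k → ℝ) :
    Summable (fun j : ℕ => |u ⬝ᵥ (P * M ^ j * Q) *ᵥ v|) ∧
      HasSum (fun j : ℕ => (-1) ^ j * u ⬝ᵥ (P * M ^ j * Q) *ᵥ v)
        (u ⬝ᵥ (P * (1 + M)⁻¹ * Q) *ᵥ v) := by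
  let φ : Matrix k k ℝ →L[ℝ] ℝ := LinearMap.toContinuousLinearMap
    { toFun := fun A => u ⬝ᵥ (P * A * Q) *ᵥ v
      map_add' := fun A B => by simp only [mul_add, add_mul, add_mulVec, dotProduct_add]
      map_smul' := fun c A => by
        simp only [mul_smul_comm, smul_mul_assoc, smul_mulVec, dotProduct_smul, smul_eq_mul,
          RingHom.id_apply] }
  have hφ (A : Matrix k k ℝ) : φ A = u ⬝ᵥ (P * A * Q) *ᵥ v := rfl
  refine ⟨.of_nonneg_of_le (fun _ => abs_nonneg _) (fun j => ?_) (h.mul_left ‖φ‖), ?_⟩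
  · rw [← hφ, ← Real.norm_eq_abs]
    exact φ.le_opNorm _
  · have hsum := (isUnit_one_add_and_hasSum_neg_pow h).2.map φ φ.continuous
    simp only [Function.comp_def, ← neg_one_smul ℝ M, smul_pow, map_smul, smul_eq_mul] at hsum
    exact hsum

theorem Matrix.summable_norm_pow_smul_diagonal_mul {b ℓ : k → ℝ} (hb : ∀ p, 0 < b p)
    (hℓ : ∀ p, 0 ≤ ℓ p) {r : ℝ} {Δ : Matrix k k ℝ}
    (h : ‖r • (diagonal (fun p => b p ^ (-(1 : ℝ) / 2)) * diagonal (fun p => √(ℓ p)) * Δ *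
      diagonal (fun p => √(ℓ p)) * diagonal (fun p => b p ^ (-(1 : ℝ) / 2)))‖ < 1) :
    Summable fun j : ℕ => ‖(r • (diagonal b⁻¹ * diagonal ℓ * Δ)) ^ j‖ := by
  set C := diagonal (fun p => b p ^ (-(1 : ℝ) / 2)) * diagonal (fun p => √(ℓ p))
  have hCC : C * C = diagonal b⁻¹ * diagonal ℓ := by
    simp only [C, diagonal_mul_diagonal, Pi.inv_apply,
      Real.rpow_neg_half_mul_sqrt_mul_self (hb _) (hℓ _)]
  have hfac : r • (diagonal b⁻¹ * diagonal ℓ * Δ) = C * (r • (C * Δ)) := by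
    rw [mul_smul_comm, ← Matrix.mul_assoc, hCC]
  have hnorm : ‖r • (C * Δ) * C‖ < 1 := by
    rwa [Matrix.mul_assoc (C * Δ), (commute_diagonal _ _).eq, ← smul_mul_assoc] at h
  exact hfac ▸ summable_norm_pow_mul_of_norm_mul_lt_one hnorm

end L2

theorem statement_18_general (n R : ℕ)
    (ℓ : Fin (R + 1) → ℝ) (hℓ : ∀ p, 0 ≤ ℓ p)
    (Φ : Matrix (Fin n) (Fin (R + 1)) ℝ) (μv : Fin (R + 1) → ℝ) (σ : ℝ)
    (hcontr : opNorm ((σ ^ 2)⁻¹ •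
        (Matrix.diagonal (fun p => (1 + ((n : ℝ) / σ ^ 2) * ℓ p) ^ (-(1 : ℝ) / 2)) *
          Matrix.diagonal (fun p => Real.sqrt (ℓ p)) *
          (Φᵀ * Φ - (n : ℝ) • (1 : Matrix (Fin (R + 1)) (Fin (R + 1)) ℝ)) *
          Matrix.diagonal (fun p => Real.sqrt (ℓ p)) *
          Matrix.diagonal (fun p => (1 + ((n : ℝ) / σ ^ 2) * ℓ p) ^ (-(1 : ℝ) / 2)))) < 1) :
    IsUnit ((1 : Matrix (Fin n) (Fin n) ℝ) +
        (σ ^ 2)⁻¹ • (Φ * Matrix.diagonal ℓ * Φᵀ)) ∧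
    Summable (fun j : ℕ => |Eterm ℓ Φ μv σ j|) ∧
    (1 / (2 * σ ^ 2)) *
        ((Φ *ᵥ μv) ⬝ᵥ
          (((1 : Matrix (Fin n) (Fin n) ℝ) +
              (σ ^ 2)⁻¹ • (Φ * Matrix.diagonal ℓ * Φᵀ))⁻¹ *ᵥ (Φ *ᵥ μv)))
      = ((n : ℝ) / (2 * σ ^ 2)) *
          (μv ⬝ᵥ ((1 + ((n : ℝ) / σ ^ 2) • Matrix.diagonal ℓ)⁻¹ *ᵥ μv))
        + (1 / 2) * ∑' j : ℕ, ((-1 : ℝ) ^ j) * Eterm ℓ Φ μv σ j := by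
  set b : Fin (R + 1) → ℝ := fun p => 1 + (n : ℝ) / σ ^ 2 * ℓ p
  have hb (p) : 0 < b p := add_pos_of_pos_of_nonneg one_pos (mul_nonneg (by positivity) (hℓ p))
  set B := 1 + ((n : ℝ) / σ ^ 2) • diagonal ℓ with hB
  set Δ := Φᵀ * Φ - (n : ℝ) • (1 : Matrix (Fin (R + 1)) (Fin (R + 1)) ℝ) with hΔ
  set M := (σ ^ 2)⁻¹ • (B⁻¹ * diagonal ℓ * Δ) with hM
  have hBBinv : B * diagonal b⁻¹ = 1 := by
    rw [hB, one_add_smul_diagonal, diagonal_mul_diagonal, ← diagonal_one]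
    exact congrArg diagonal (funext fun p => mul_inv_cancel₀ (hb p).ne')
  have hsum := summable_norm_pow_smul_diagonal_mul (b := b) hb hℓ (r := (σ ^ 2)⁻¹) (Δ := Δ) hcontr
  rw [← inv_eq_right_inv hBBinv] at hsum
  obtain ⟨habs, hseries⟩ :=
    summable_abs_and_hasSum_dotProduct_mulVec hsum ((σ ^ 2)⁻¹ • (B⁻¹ * Δ)) B⁻¹ μv μv
  obtain ⟨hGu, hG⟩ := isUnit_and_transpose_mul_inv_one_add_mul_mul Φ hB hΔ hM
    (IsUnit.of_mul_eq_one _ hBBinv) (isUnit_one_add_and_hasSum_neg_pow hsum).1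
  refine ⟨hGu, habs, ?_⟩
  have htsum : ∑' j : ℕ, (-1 : ℝ) ^ j * Eterm ℓ Φ μv σ j =
      μv ⬝ᵥ ((σ ^ 2)⁻¹ • (B⁻¹ * Δ) * (1 + M)⁻¹ * B⁻¹) *ᵥ μv := hseries.tsum_eq
  rw [htsum, mulVec_dotProduct_mulVec_mulVec, hG]
  simp only [add_mulVec, smul_mulVec, dotProduct_add, dotProduct_smul, smul_mul_assoc, smul_eq_mul]
  ring

/-- **Decomposition of the data-fit term of the stochastic complexity (Lemma C.12).** -/
theorem statement_18 (n R : ℕ) (hn : 1 ≤ n)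
    (ℓ : Fin (R + 1) → ℝ) (hℓ : ∀ p, 0 ≤ ℓ p)
    (Φ : Matrix (Fin n) (Fin (R + 1)) ℝ) (μv : Fin (R + 1) → ℝ) (σ : ℝ) (hσ : 0 < σ)
    (hcontr : opNorm ((σ ^ 2)⁻¹ •
        (Matrix.diagonal (fun p => (1 + ((n : ℝ) / σ ^ 2) * ℓ p) ^ (-(1 : ℝ) / 2)) *
          Matrix.diagonal (fun p => Real.sqrt (ℓ p)) *
          (Φᵀ * Φ - (n : ℝ) • (1 : Matrix (Fin (R + 1)) (Fin (R + 1)) ℝ)) *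
          Matrix.diagonal (fun p => Real.sqrt (ℓ p)) *
          Matrix.diagonal (fun p => (1 + ((n : ℝ) / σ ^ 2) * ℓ p) ^ (-(1 : ℝ) / 2)))) < 1) :
    IsUnit ((1 : Matrix (Fin n) (Fin n) ℝ) +
        (σ ^ 2)⁻¹ • (Φ * Matrix.diagonal ℓ * Φᵀ)) ∧
    Summable (fun j : ℕ => |Eterm ℓ Φ μv σ j|) ∧
    (1 / (2 * σ ^ 2)) *
        ((Φ *ᵥ μv) ⬝ᵥ
          (((1 : Matrix (Fin n) (Fin n) ℝ) +
              (σ ^ 2)⁻¹ • (Φ * Matrix.diagonal ℓ * Φᵀ))⁻¹ *ᵥ (Φ *ᵥ μv)))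
      = ((n : ℝ) / (2 * σ ^ 2)) *
          (μv ⬝ᵥ ((1 + ((n : ℝ) / σ ^ 2) • Matrix.diagonal ℓ)⁻¹ *ᵥ μv))
        + (1 / 2) * ∑' j : ℕ, ((-1 : ℝ) ^ j) * Eterm ℓ Φ μv σ j :=
  statement_18_general n R ℓ hℓ Φ μv σ hcontr
end
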